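/- Assume the unit-root assumption, the complementation assumption, and that N_{−2} ≠ 0 and N_{−m} = 0 for every m ≥ 3 (pole of order exactly 2 at z = 1). Then: (a) N_{−2}(I − A₁) = (I − A₁)N_{−2} = 0 and A₁N_{−2} = N_{−2}A₁ = N_{−2}; (b) N_{−2}x = 0 for every x ∈ ran T + ker T; (c) N_{−2}(T^g x) = x for every x ∈ K; (d) ran N_{−2} = K; (e) N_{−1} = N_{−2} + P, where P := N_{−1}A₁. -/

import Mathlib

/-!
Write `R(z) = (I - z A₁)⁻¹` and `N_j` for its Laurent coefficients at `z = 1`. The identity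
`(I - A₁) - (z - 1) A₁ = I - z A₁` turns into the recurrences `T N_j = A₁ N_{j-1}` and
`N_j T = N_{j-1} A₁` for `j ≠ 0`, since the difference of the two sides is the integral of
`(z - 1)^{-j-1} I`. With `N_{-3} = 0` this gives `T N_{-2} = N_{-2} T = 0`,
`T N_{-1} = N_{-2}` and `N_{-1} T = N_{-2}`. On a fixed vector `w = A₁ w` the resolvent is
explicit, `R(z) w = (1 - z)⁻¹ w`, so `N_{-1} w = w` and `N_j w = 0` for `j ≠ -1`.
For `x ∈ K` the vector `u = T^g x` solves `T u = x`, hence `N_{-2} u = N_{-1} T u = N_{-1} x = x`;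
so `K ⊆ ran N_{-2}`, while `T N_{-1} = N_{-2}` and `T N_{-2} = 0` give the reverse inclusion.
-/

/-- Laurent coefficients at `z = 1` of the inverse pencil `(I - z A₁)⁻¹`:
`N j = -(1/(2πi)) ∮_{|z-1|=r} (I - z A₁)⁻¹ (z-1)^{-j-1} dz`. -/
noncomputable def laurentN {B : Type*} [NormedAddCommGroup B] [NormedSpace ℂ B]
    (A₁ : B →L[ℂ] B) (r : ℝ) (j : ℤ) : B →L[ℂ] B :=
  (-(2 * (Real.pi : ℂ) * Complex.I)⁻¹) •
    circleIntegral (fun z => (z - 1) ^ (-j - 1) • Ring.inverse (1 - z • A₁)) 1 r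

open Complex Metric Set Real

section CircleIntegral

variable {E F : Type*} [NormedAddCommGroup E] [NormedSpace ℂ E] [NormedAddCommGroup F]
  [NormedSpace ℂ F]

theorem ContinuousLinearMap.circleIntegral_comp_comm [CompleteSpace E] [CompleteSpace F]
    (L : E →L[ℂ] F) {f : ℂ → E} {c : ℂ} {R : ℝ} (hf : CircleIntegrable f c R) :
    (∮ z in C(c, R), L (f z)) = L (∮ z in C(c, R), f z) := by
  simp only [circleIntegral, ← L.intervalIntegral_comp_comm hf.out, L.map_smul]

theorem circleIntegral_sub_center_zpow_smul [CompleteSpace E] (c : ℂ) {R : ℝ} (hR : 0 < R)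
    (n : ℤ) (v : E) :
    (∮ z in C(c, R), (z - c) ^ n • v) = if n = -1 then (2 * π * I : ℂ) • v else 0 := by
  rw [circleIntegral.integral_smul_const]
  split_ifs with hn
  · rw [hn, ← circleIntegral.integral_sub_center_inv c hR.ne']
    simp only [zpow_neg_one]
  · rw [circleIntegral.integral_sub_zpow_of_ne hn, zero_smul]

theorem mul_circleIntegral {A : Type*} [NormedRing A] [NormedAlgebra ℂ A] [CompleteSpace A]
    (X : A) {f : ℂ → A} {c : ℂ} {R : ℝ} (hf : CircleIntegrable f c R) :
    X * (∮ z in C(c, R), f z) = ∮ z in C(c, R), X * f z :=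
  ((ContinuousLinearMap.mul ℂ A X).circleIntegral_comp_comm hf).symm

theorem circleIntegral_mul {A : Type*} [NormedRing A] [NormedAlgebra ℂ A] [CompleteSpace A]
    (X : A) {f : ℂ → A} {c : ℂ} {R : ℝ} (hf : CircleIntegrable f c R) :
    (∮ z in C(c, R), f z) * X = ∮ z in C(c, R), f z * X :=
  (((ContinuousLinearMap.mul ℂ A).flip X).circleIntegral_comp_comm hf).symm

theorem ContinuousLinearMap.circleIntegral_apply [CompleteSpace E] [CompleteSpace F]
    {f : ℂ → E →L[ℂ] F} {c : ℂ} {R : ℝ} (hf : CircleIntegrable f c R) (v : E) :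
    (∮ z in C(c, R), f z) v = ∮ z in C(c, R), f z v :=
  ((ContinuousLinearMap.apply ℂ F v).circleIntegral_comp_comm hf).symm

end CircleIntegral

theorem one_sub_mul_inverse_one_sub_smul {R A : Type*} [CommRing R] [Ring A] [Algebra R A]
    {a : A} {z : R} (hz : IsUnit (1 - z • a)) :
    (1 - a) * Ring.inverse (1 - z • a) - (z - 1) • (a * Ring.inverse (1 - z • a)) = 1 := by
  rw [← smul_mul_assoc, ← sub_mul, show (1 : A) - a - (z - 1) • a = 1 - z • a by module,
    Ring.mul_inverse_cancel _ hz]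

theorem inverse_one_sub_smul_mul_one_sub {R A : Type*} [CommRing R] [Ring A] [Algebra R A]
    {a : A} {z : R} (hz : IsUnit (1 - z • a)) :
    Ring.inverse (1 - z • a) * (1 - a) - (z - 1) • (Ring.inverse (1 - z • a) * a) = 1 := by
  rw [← mul_smul_comm, ← mul_sub, show (1 : A) - a - (z - 1) • a = 1 - z • a by module,
    Ring.inverse_mul_cancel _ hz]

section Pencil

variable {B : Type*} [NormedAddCommGroup B] [NormedSpace ℂ B] {A₁ : B →L[ℂ] B}

theorem isUnit_one_sub_smul_of_mem_sphere {η r : ℝ}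
    (hinv : ∀ z : ℂ, ‖z‖ < 1 + η → z ≠ 1 → IsUnit (1 - z • A₁)) (hr0 : 0 < r)
    (hrη : r < η) : ∀ z ∈ sphere (1 : ℂ) r, IsUnit (1 - z • A₁) := by
  intro z hz
  refine hinv z ?_ (ne_of_mem_sphere hz hr0.ne')
  calc ‖z‖ ≤ ‖z - 1‖ + ‖(1 : ℂ)‖ := norm_le_norm_sub_add z 1
    _ < 1 + η := by rw [mem_sphere_iff_norm.mp hz, norm_one]; linarith

theorem inverse_one_sub_smul_apply_of_apply_eq_self {z : ℂ} (hz : z ≠ 1)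
    (hu : IsUnit (1 - z • A₁)) {w : B} (hw : A₁ w = w) :
    Ring.inverse (1 - z • A₁) w = (1 - z)⁻¹ • w := by
  have h : (1 - z • A₁) w = (1 - z) • w := by
    simp only [sub_apply, one_apply_eq_self, smul_apply, hw, sub_smul, one_smul]
  rw [eq_inv_smul_iff₀ (sub_ne_zero.mpr hz.symm), ← map_smul, ← h,
    ← mul_apply_eq_comp, Ring.inverse_mul_cancel _ hu, one_apply_eq_self]

variable [CompleteSpace B]

theorem continuousOn_inverse_one_sub_smul {s : Set ℂ}
    (hu : ∀ z ∈ s, IsUnit (1 - z • A₁)) :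
    ContinuousOn (fun z : ℂ => Ring.inverse (1 - z • A₁)) s := fun z hz =>
  ContinuousAt.continuousWithinAt <| ContinuousAt.comp (g := Ring.inverse)
    (by simpa using NormedRing.inverse_continuousAt (hu z hz).unit)
    (continuous_const.sub (continuous_id.smul continuous_const)).continuousAt

theorem continuousOn_sub_one_zpow_smul_inverse {r : ℝ} (hr : 0 < r)
    (hu : ∀ z ∈ sphere (1 : ℂ) r, IsUnit (1 - z • A₁)) (n : ℤ) :
    ContinuousOn (fun z : ℂ => (z - 1) ^ n • Ring.inverse (1 - z • A₁)) (sphere 1 r) :=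
  ((continuousOn_id.sub continuousOn_const).zpow₀ n
    fun _ hz => Or.inl (sub_ne_zero.mpr (ne_of_mem_sphere hz hr.ne'))).smul
    (continuousOn_inverse_one_sub_smul hu)

theorem one_sub_mul_laurentN {r : ℝ} (hr : 0 < r)
    (hu : ∀ z ∈ sphere (1 : ℂ) r, IsUnit (1 - z • A₁)) {j : ℤ} (hj : j ≠ 0) :
    (1 - A₁) * laurentN A₁ r j = A₁ * laurentN A₁ r (j - 1) := by
  have hc := continuousOn_sub_one_zpow_smul_inverse hr hu
  have hf := fun n => (hc n).circleIntegrable hr.le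
  have hXf : ∀ (X : B →L[ℂ] B) (n : ℤ),
      CircleIntegrable (fun z : ℂ => X * ((z - 1) ^ n • Ring.inverse (1 - z • A₁))) 1 r :=
    fun _ n => (continuousOn_const.mul (hc n)).circleIntegrable hr.le
  have hpt : EqOn
      (fun z : ℂ => (1 - A₁) * ((z - 1) ^ (-j - 1) • Ring.inverse (1 - z • A₁)) -
        A₁ * ((z - 1) ^ (-(j - 1) - 1) • Ring.inverse (1 - z • A₁)))
      (fun z : ℂ => (z - 1) ^ (-j - 1) • (1 : B →L[ℂ] B)) (sphere 1 r) := fun z hz => by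
    dsimp only
    rw [show -(j - 1) - 1 = -j - 1 + 1 by ring,
      zpow_add_one₀ (sub_ne_zero.mpr (ne_of_mem_sphere hz hr.ne')),
      mul_smul, mul_smul_comm, mul_smul_comm, mul_smul_comm, ← smul_sub,
      one_sub_mul_inverse_one_sub_smul (hu z hz)]
  rw [← sub_eq_zero, laurentN, laurentN, mul_smul_comm, mul_smul_comm, ← smul_sub,
    mul_circleIntegral _ (hf _), mul_circleIntegral _ (hf _),
    ← circleIntegral.integral_sub (hXf _ _) (hXf _ _), circleIntegral.integral_congr hr.le hpt,
    circleIntegral_sub_center_zpow_smul 1 hr, if_neg (by omega), smul_zero]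

theorem laurentN_mul_one_sub {r : ℝ} (hr : 0 < r)
    (hu : ∀ z ∈ sphere (1 : ℂ) r, IsUnit (1 - z • A₁)) {j : ℤ} (hj : j ≠ 0) :
    laurentN A₁ r j * (1 - A₁) = laurentN A₁ r (j - 1) * A₁ := by
  have hc := continuousOn_sub_one_zpow_smul_inverse hr hu
  have hf := fun n => (hc n).circleIntegrable hr.le
  have hfX : ∀ (X : B →L[ℂ] B) (n : ℤ),
      CircleIntegrable (fun z : ℂ => ((z - 1) ^ n • Ring.inverse (1 - z • A₁)) * X) 1 r :=
    fun _ n => ((hc n).mul continuousOn_const).circleIntegrable hr.le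
  have hpt : EqOn
      (fun z : ℂ => ((z - 1) ^ (-j - 1) • Ring.inverse (1 - z • A₁)) * (1 - A₁) -
        ((z - 1) ^ (-(j - 1) - 1) • Ring.inverse (1 - z • A₁)) * A₁)
      (fun z : ℂ => (z - 1) ^ (-j - 1) • (1 : B →L[ℂ] B)) (sphere 1 r) := fun z hz => by
    dsimp only
    rw [show -(j - 1) - 1 = -j - 1 + 1 by ring,
      zpow_add_one₀ (sub_ne_zero.mpr (ne_of_mem_sphere hz hr.ne')),
      mul_smul, smul_mul_assoc, smul_mul_assoc, smul_mul_assoc, ← smul_sub,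
      inverse_one_sub_smul_mul_one_sub (hu z hz)]
  rw [← sub_eq_zero, laurentN, laurentN, smul_mul_assoc, smul_mul_assoc, ← smul_sub,
    circleIntegral_mul _ (hf _), circleIntegral_mul _ (hf _),
    ← circleIntegral.integral_sub (hfX _ _) (hfX _ _), circleIntegral.integral_congr hr.le hpt,
    circleIntegral_sub_center_zpow_smul 1 hr, if_neg (by omega), smul_zero]

theorem laurentN_apply_of_apply_eq_self {r : ℝ} (hr : 0 < r)
    (hu : ∀ z ∈ sphere (1 : ℂ) r, IsUnit (1 - z • A₁)) {w : B} (hw : A₁ w = w)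
    (j : ℤ) :
    laurentN A₁ r j w = if j = -1 then w else 0 := by
  have hpt : EqOn (fun z : ℂ => ((z - 1) ^ (-j - 1) • Ring.inverse (1 - z • A₁)) w)
      (fun z : ℂ => (z - 1) ^ (-j - 2) • (-w)) (sphere 1 r) := fun z hz => by
    have hz1 := sub_ne_zero.mpr (ne_of_mem_sphere hz hr.ne')
    dsimp only
    rw [smul_apply, inverse_one_sub_smul_apply_of_apply_eq_self (sub_ne_zero.mp hz1) (hu z hz) hw,
      smul_smul, smul_neg, ← neg_smul, ← neg_sub z, inv_neg, mul_neg, ← zpow_neg_one,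
      ← zpow_add₀ hz1]
    ring_nf
  rw [laurentN, smul_apply, ContinuousLinearMap.circleIntegral_apply
    ((continuousOn_sub_one_zpow_smul_inverse hr hu _).circleIntegrable hr.le),
    circleIntegral.integral_congr hr.le hpt, circleIntegral_sub_center_zpow_smul 1 hr]
  by_cases hj : j = -1
  · rw [if_pos (by omega), if_pos hj, smul_smul, neg_mul, inv_mul_cancel₀ (by simp [pi_ne_zero]),
      neg_smul, one_smul, neg_neg]
  · rw [if_neg (by omega), if_neg hj, smul_zero]

end Pencil

theorem apply_apply_eq_self_of_mul_eq_projection {R M : Type*} [Semiring R] [TopologicalSpace M]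
    [AddCommMonoid M] [Module R M] {T G P : M →L[R] M} (hP : IsIdempotentElem P)
    (hTG : T * G = P)
    (hrange : LinearMap.range (P : M →ₗ[R] M) = LinearMap.range (T : M →ₗ[R] M))
    {x : M} (hx : x ∈ LinearMap.range (T : M →ₗ[R] M)) : T (G x) = x := by
  rw [← mul_apply_eq_comp, hTG]
  exact (LinearMap.IsIdempotentElem.mem_range_iff
    (ContinuousLinearMap.IsIdempotentElem.toLinearMap hP)).mp (hrange ▸ hx)

theorem statement15_general
    {B : Type*} [NormedAddCommGroup B] [NormedSpace ℂ B] [CompleteSpace B]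
    (A₁ : B →L[ℂ] B) (η : ℝ)
    (hinv : ∀ z : ℂ, ‖z‖ < 1 + η → z ≠ 1 → IsUnit (1 - z • A₁))
    (r : ℝ) (hr0 : 0 < r) (hrη : r < η)
    (T : B →L[ℂ] B) (hT : T = 1 - A₁)
    (Pran : B →L[ℂ] B)
    (hPran_idem : Pran * Pran = Pran)
    (hPran_range : LinearMap.range (Pran : B →ₗ[ℂ] B) = LinearMap.range (T : B →ₗ[ℂ] B))
    (Tg : B →L[ℂ] B)
    (hTg1 : T * Tg = Pran)
    (hNm : ∀ m : ℤ, 3 ≤ m → laurentN A₁ r (-m) = 0) :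
    (laurentN A₁ r (-2) * (1 - A₁) = 0 ∧ (1 - A₁) * laurentN A₁ r (-2) = 0 ∧
      A₁ * laurentN A₁ r (-2) = laurentN A₁ r (-2) ∧
      laurentN A₁ r (-2) * A₁ = laurentN A₁ r (-2)) ∧
    (∀ x ∈ (LinearMap.range (T : B →ₗ[ℂ] B) ⊔ LinearMap.ker (T : B →ₗ[ℂ] B) : Submodule ℂ B),
      laurentN A₁ r (-2) x = 0) ∧
    (∀ x ∈ (LinearMap.range (T : B →ₗ[ℂ] B) ⊓ LinearMap.ker (T : B →ₗ[ℂ] B) : Submodule ℂ B),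
      laurentN A₁ r (-2) (Tg x) = x) ∧
    (LinearMap.range (laurentN A₁ r (-2) : B →ₗ[ℂ] B) = LinearMap.range (T : B →ₗ[ℂ] B) ⊓ LinearMap.ker (T : B →ₗ[ℂ] B)) ∧
    (laurentN A₁ r (-1) = laurentN A₁ r (-2) + laurentN A₁ r (-1) * A₁) := by
  subst hT
  have hu := isUnit_one_sub_smul_of_mem_sphere hinv hr0 hrη
  have hTN₂ : (1 - A₁) * laurentN A₁ r (-2) = 0 := by
    simpa [hNm 3 le_rfl] using one_sub_mul_laurentN hr0 hu (j := -2) (by norm_num)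
  have hN₂T : laurentN A₁ r (-2) * (1 - A₁) = 0 := by
    simpa [hNm 3 le_rfl] using laurentN_mul_one_sub hr0 hu (j := -2) (by norm_num)
  have hAN₂ : A₁ * laurentN A₁ r (-2) = laurentN A₁ r (-2) := by
    rwa [sub_mul, one_mul, sub_eq_zero, eq_comm] at hTN₂
  have hN₂A : laurentN A₁ r (-2) * A₁ = laurentN A₁ r (-2) := by
    rwa [mul_sub, mul_one, sub_eq_zero, eq_comm] at hN₂T
  have hTN₁ : (1 - A₁) * laurentN A₁ r (-1) = laurentN A₁ r (-2) := by
    simpa [hAN₂] using one_sub_mul_laurentN hr0 hu (j := -1) (by norm_num)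
  have hN₁T : laurentN A₁ r (-1) * (1 - A₁) = laurentN A₁ r (-2) := by
    simpa [hN₂A] using laurentN_mul_one_sub hr0 hu (j := -1) (by norm_num)
  have hfix : ∀ w ∈ LinearMap.ker ((1 - A₁ : B →L[ℂ] B) : B →ₗ[ℂ] B), A₁ w = w :=
    fun w hw => (sub_eq_zero.mp hw).symm
  have hK : ∀ x ∈ (LinearMap.range ((1 - A₁ : B →L[ℂ] B) : B →ₗ[ℂ] B) ⊓
      LinearMap.ker ((1 - A₁ : B →L[ℂ] B) : B →ₗ[ℂ] B) : Submodule ℂ B),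
      laurentN A₁ r (-2) (Tg x) = x := by
    rintro x ⟨hxran, hxker⟩
    rw [← hN₁T, mul_apply_eq_comp,
      apply_apply_eq_self_of_mul_eq_projection hPran_idem hTg1 hPran_range hxran,
      laurentN_apply_of_apply_eq_self hr0 hu (hfix x hxker), if_pos rfl]
  refine ⟨⟨hN₂T, hTN₂, hAN₂, hN₂A⟩, ?_, hK, ?_,
    by rw [← hN₁T, mul_sub, mul_one, sub_add_cancel]⟩
  · intro x hx
    obtain ⟨_, ⟨v, rfl⟩, w, hw, rfl⟩ := Submodule.mem_sup.mp hx
    rw [map_add, ContinuousLinearMap.coe_coe, ← mul_apply_eq_comp, hN₂T, zero_apply, zero_add,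
      laurentN_apply_of_apply_eq_self hr0 hu (hfix w hw), if_neg (by norm_num)]
  · refine le_antisymm (le_inf ?_ ?_) fun x hx => ⟨Tg x, hK x hx⟩
    · rw [← hTN₁, ContinuousLinearMap.toLinearMap_mul]
      exact LinearMap.range_comp_le_range _ _
    · rw [LinearMap.range_le_ker_iff, ← Module.End.mul_eq_comp,
        ← ContinuousLinearMap.toLinearMap_mul, hTN₂, ContinuousLinearMap.toLinearMap_zero]

/-- with `T := I - A₁` and `K := ran T ∩ ker T`, under the unit-root
assumption, the complementation assumption and a pole of order exactly 2 at `z = 1`: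
(a) `N_{-2} T = T N_{-2} = 0` and `A₁ N_{-2} = N_{-2} A₁ = N_{-2}`;
(b) `N_{-2} x = 0` for every `x ∈ ran T + ker T`;
(c) `N_{-2} (Tg x) = x` for every `x ∈ K`;
(d) `ran N_{-2} = K`;
(e) `N_{-1} = N_{-2} + P` where `P := N_{-1} A₁`. -/
theorem statement15
    {B : Type*} [NormedAddCommGroup B] [NormedSpace ℂ B] [CompleteSpace B]
    (A₁ : B →L[ℂ] B) (η : ℝ) (hη : 0 < η)
    (hinv : ∀ z : ℂ, ‖z‖ < 1 + η → z ≠ 1 → IsUnit (1 - z • A₁))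
    (hnot : ¬ IsUnit (1 - A₁))
    (r : ℝ) (hr0 : 0 < r) (hrη : r < η)
    (T : B →L[ℂ] B) (hT : T = 1 - A₁)
    (hranclosed : IsClosed ((LinearMap.range (T : B →ₗ[ℂ] B) : Submodule ℂ B) : Set B))
    (Pran Pker : B →L[ℂ] B)
    (hPran_idem : Pran * Pran = Pran)
    (hPran_range : LinearMap.range (Pran : B →ₗ[ℂ] B) = LinearMap.range (T : B →ₗ[ℂ] B))
    (hPker_idem : Pker * Pker = Pker)
    (hPker_range : LinearMap.range (Pker : B →ₗ[ℂ] B) = LinearMap.ker (T : B →ₗ[ℂ] B))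
    (Tg : B →L[ℂ] B)
    (hTg1 : T * Tg = Pran) (hTg2 : Tg * T = 1 - Pker)
    (hTg3 : Tg = (1 - Pker) * Tg * Pran)
    (hN2 : laurentN A₁ r (-2) ≠ 0)
    (hNm : ∀ m : ℤ, 3 ≤ m → laurentN A₁ r (-m) = 0) :
    (laurentN A₁ r (-2) * (1 - A₁) = 0 ∧ (1 - A₁) * laurentN A₁ r (-2) = 0 ∧
      A₁ * laurentN A₁ r (-2) = laurentN A₁ r (-2) ∧
      laurentN A₁ r (-2) * A₁ = laurentN A₁ r (-2)) ∧
    (∀ x ∈ (LinearMap.range (T : B →ₗ[ℂ] B) ⊔ LinearMap.ker (T : B →ₗ[ℂ] B) : Submodule ℂ B),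
      laurentN A₁ r (-2) x = 0) ∧
    (∀ x ∈ (LinearMap.range (T : B →ₗ[ℂ] B) ⊓ LinearMap.ker (T : B →ₗ[ℂ] B) : Submodule ℂ B),
      laurentN A₁ r (-2) (Tg x) = x) ∧
    (LinearMap.range (laurentN A₁ r (-2) : B →ₗ[ℂ] B) = LinearMap.range (T : B →ₗ[ℂ] B) ⊓ LinearMap.ker (T : B →ₗ[ℂ] B)) ∧
    (laurentN A₁ r (-1) = laurentN A₁ r (-2) + laurentN A₁ r (-1) * A₁) :=
  statement15_general A₁ η hinv r hr0 hrη T hT Pran hPran_idem hPran_range Tg hTg1 hNm
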